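/- arXiv:2209.12695 — 2 statements merged into one kernel-verified Lean document; each statement's English description precedes it below -/
import Mathlib

section
/- Let L = {k₁ > ... > k_m} be a level datum with ramification indices r₁ < ... < r_m (r₀ = 1) and write k_i = p_i/d_i in lowest terms. Then the number of non-integral admissible exponents of L equals Σ_{i=1}^m (r_i·k_i − ⌊r_{i−1}·k_i⌋), where all the r_i·k_i are integers. -/
/-!
A non-integral admissible exponent `x` has `x.den ∤ r₀ = 1` and `x.den ∣ r_j` for some `j`;
for the least such `i` we get `x ∈ (0, k_i]` (the `k`'s decrease) and `x.den ∤ r_{i-1}`.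
Since `r_{i-1} ∣ r_i`, these layers are disjoint, and the `i`-th one consists of the multiples
of `1/r_i` in `(0, k_i]` that are not multiples of `1/r_{i-1}`, so it has
`⌊r_i k_i⌋ - ⌊r_{i-1} k_i⌋ = r_i k_i - ⌊r_{i-1} k_i⌋` elements.
-/

namespace Rat

theorem natCast_mul_mem_range_intCast_of_den_dvd {x : ℚ} {r : ℕ} (h : x.den ∣ r) :
    (r : ℚ) * x ∈ Set.range ((↑) : ℤ → ℚ) := by
  obtain ⟨c, rfl⟩ := h
  exact ⟨x.num * c, by push_cast; rw [mul_right_comm, den_mul_eq_num]⟩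

theorem den_dvd_iff_exists_eq_natCast_div {x : ℚ} (hx : 0 ≤ x) {r : ℕ} (hr : r ≠ 0) :
    x.den ∣ r ↔ ∃ n : ℕ, x = n / r := by
  constructor
  · intro h
    obtain ⟨z, hz⟩ := natCast_mul_mem_range_intCast_of_den_dvd h
    have hz0 : 0 ≤ z := by exact_mod_cast hz ▸ mul_nonneg r.cast_nonneg hx
    refine ⟨z.toNat, ?_⟩
    rw [eq_div_iff (by exact_mod_cast hr), mul_comm, ← hz]
    exact_mod_cast (Int.toNat_of_nonneg hz0).symm
  · rintro ⟨n, rfl⟩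
    exact Int.natCast_dvd_natCast.mp (by simpa [Rat.divInt_eq_div] using Rat.den_dvd n r)

end Rat

def gridPoints (r : ℕ) (b : ℚ) : Finset ℚ :=
  (Finset.Icc 1 ⌊(r : ℚ) * b⌋₊).image fun n : ℕ => (n : ℚ) / r

section GridPoints

variable {r : ℕ}

theorem mem_gridPoints (hr : r ≠ 0) {b x : ℚ} :
    x ∈ gridPoints r b ↔ 0 < x ∧ x ≤ b ∧ ∃ n : ℕ, x = n / r := by
  have hr' : (0 : ℚ) < r := by positivity
  simp only [gridPoints, Finset.mem_image, Finset.mem_Icc]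
  constructor
  · rintro ⟨n, ⟨hn, hnb⟩, rfl⟩
    refine ⟨by positivity, ?_, n, rfl⟩
    rw [div_le_iff₀ hr', mul_comm]
    exact (Nat.le_floor_iff' (by omega)).1 hnb
  · rintro ⟨hx, hxb, n, rfl⟩
    have hn : n ≠ 0 := by rintro rfl; simp at hx
    refine ⟨n, ⟨Nat.one_le_iff_ne_zero.2 hn, (Nat.le_floor_iff' hn).2 ?_⟩, rfl⟩
    rwa [div_le_iff₀ hr', mul_comm] at hxb

theorem coe_gridPoints (hr : r ≠ 0) (b : ℚ) :
    (gridPoints r b : Set ℚ) = Set.Ioc 0 b ∩ {x | x.den ∣ r} := by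
  ext x
  simp only [Finset.mem_coe, mem_gridPoints hr, Set.mem_inter_iff, Set.mem_Ioc, Set.mem_ofPred_eq]
  constructor
  · rintro ⟨hx, hxb, hn⟩
    exact ⟨⟨hx, hxb⟩, (Rat.den_dvd_iff_exists_eq_natCast_div hx.le hr).2 hn⟩
  · rintro ⟨⟨hx, hxb⟩, hd⟩
    exact ⟨hx, hxb, (Rat.den_dvd_iff_exists_eq_natCast_div hx.le hr).1 hd⟩

theorem card_gridPoints (hr : r ≠ 0) (b : ℚ) : (gridPoints r b).card = ⌊(r : ℚ) * b⌋₊ := by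
  have hinj : Function.Injective fun n : ℕ => (n : ℚ) / r := fun a b h => by
    exact_mod_cast (div_left_inj' (Nat.cast_ne_zero.2 hr : (r : ℚ) ≠ 0)).1 h
  rw [gridPoints, Finset.card_image_of_injective _ hinj, Nat.card_Icc, Nat.add_sub_cancel]

theorem card_gridPoints_sdiff (hr : r ≠ 0) {s : ℕ} (hs : s ≠ 0) (hrs : r ∣ s) {b : ℚ}
    (hb : 0 ≤ b) :
    ((gridPoints s b \ gridPoints r b).card : ℚ) = ⌊(s : ℚ) * b⌋ - ⌊(r : ℚ) * b⌋ := by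
  have hsub : gridPoints r b ⊆ gridPoints s b := by
    rw [← Finset.coe_subset, coe_gridPoints hr, coe_gridPoints hs]
    exact Set.inter_subset_inter_right _ fun x hx => dvd_trans hx hrs
  have hrb : (r : ℚ) * b ≤ s * b :=
    mul_le_mul_of_nonneg_right (by exact_mod_cast Nat.le_of_dvd (Nat.pos_of_ne_zero hs) hrs) hb
  rw [Finset.card_sdiff_of_subset hsub, card_gridPoints hr, card_gridPoints hs,
    Nat.cast_sub (Nat.floor_le_floor hrb), natCast_floor_eq_intCast_floor (by positivity),
    natCast_floor_eq_intCast_floor (by positivity)]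

end GridPoints

section Layers

variable {α : Type*} {m : ℕ} {S : ℕ → Set α}

theorem iUnion_inter_succ_diff_zero (hS : MonotoneOn S (Set.Iic m)) {T : Fin m → Set α}
    (hT : Antitone T) :
    (⋃ i : Fin m, T i ∩ S (i + 1)) \ S 0 = ⋃ i : Fin m, T i ∩ (S (i + 1) \ S i) := by
  ext x
  simp only [Set.mem_sdiff, Set.mem_iUnion, Set.mem_inter_iff]
  constructor
  · classical
    rintro ⟨⟨i, hxT, hxS⟩, hx0⟩
    have hex : ∃ j, j < m ∧ x ∈ S (j + 1) := ⟨i, i.2, hxS⟩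
    obtain ⟨hjm, hjS⟩ := Nat.find_spec hex
    have hji : Nat.find hex ≤ i := Nat.find_min' hex ⟨i.2, hxS⟩
    refine ⟨⟨Nat.find hex, hjm⟩, hT (show ⟨Nat.find hex, hjm⟩ ≤ i from hji) hxT, hjS, ?_⟩
    show x ∉ S (Nat.find hex)
    cases hj : Nat.find hex with
    | zero => exact hx0
    | succ j =>
      exact fun hxj => Nat.find_min hex (m := j) (by omega) ⟨by omega, hxj⟩
  · rintro ⟨i, hxT, hxS, hxi⟩
    refine ⟨⟨i, hxT, hxS⟩, fun hx0 => hxi ?_⟩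
    exact hS (Set.mem_Iic.2 (Nat.zero_le _)) (Set.mem_Iic.2 i.2.le) (Nat.zero_le _) hx0

theorem pairwise_disjoint_succ_diff (hS : MonotoneOn S (Set.Iic m)) :
    Pairwise fun i j : Fin m => Disjoint (S (i + 1) \ S i) (S (j + 1) \ S j) := by
  have hlt : ∀ i j : Fin m, i < j → Disjoint (S (i + 1) \ S i) (S (j + 1) \ S j) := by
    intro i j hij
    refine Set.disjoint_left.2 fun x hxi hxj => hxj.2 ?_
    exact hS (Set.mem_Iic.2 i.2) (Set.mem_Iic.2 j.2.le) hij hxi.1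
  intro i j hij
  obtain h | h := hij.lt_or_gt
  · exact hlt i j h
  · exact (hlt j i h).symm

end Layers

section LcmChain

variable {m : ℕ} {R : ℕ → ℕ} {d : Fin m → ℕ}

theorem dvd_of_lcm_chain (hR : ∀ i : Fin m, R (i + 1) = Nat.lcm (R i) (d i)) {a b : ℕ}
    (hab : a ≤ b) (hb : b ≤ m) : R a ∣ R b := by
  induction b, hab using Nat.le_induction with
  | base => rfl
  | succ n _ ih =>
    rw [show R (n + 1) = Nat.lcm (R n) (d ⟨n, hb⟩) from hR ⟨n, hb⟩]
    exact (ih (by omega)).trans (Nat.dvd_lcm_left _ _)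

theorem ne_zero_of_lcm_chain (hR : ∀ i : Fin m, R (i + 1) = Nat.lcm (R i) (d i)) (h0 : R 0 ≠ 0)
    (hd : ∀ i, d i ≠ 0) {j : ℕ} (hj : j ≤ m) : R j ≠ 0 := by
  induction j with
  | zero => exact h0
  | succ n ih =>
    rw [show R (n + 1) = Nat.lcm (R n) (d ⟨n, hj⟩) from hR ⟨n, hj⟩]
    exact Nat.lcm_ne_zero (ih (by omega)) (hd _)

theorem ncard_iUnion_Ioc_inter_den_dvd_diff
    (hR : ∀ i : Fin m, R (i + 1) = Nat.lcm (R i) (d i)) (hRne : ∀ j ≤ m, R j ≠ 0)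
    {b : Fin m → ℚ} (hb : Antitone b) (hb0 : ∀ i, 0 ≤ b i) :
    (((⋃ i : Fin m, Set.Ioc 0 (b i) ∩ {x : ℚ | x.den ∣ R (i + 1)}) \ {x | x.den ∣ R 0}).ncard
      : ℚ) = ∑ i : Fin m, ((⌊(R (i + 1) : ℚ) * b i⌋ : ℚ) - ⌊(R i : ℚ) * b i⌋) := by
  set S : ℕ → Set ℚ := fun j => {x | x.den ∣ R j}
  have hS : MonotoneOn S (Set.Iic m) :=
    fun a _ c hc hac x hx => dvd_trans hx (dvd_of_lcm_chain hR hac hc)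
  have hT : Antitone fun i => Set.Ioc 0 (b i) :=
    fun i j hij => Set.Ioc_subset_Ioc_right (hb hij)
  have hlayer : ∀ i : Fin m, Set.Ioc 0 (b i) ∩ (S (i + 1) \ S i) =
      ↑(gridPoints (R (i + 1)) (b i) \ gridPoints (R i) (b i)) := fun i => by
    rw [Finset.coe_sdiff, coe_gridPoints (hRne _ i.2), coe_gridPoints (hRne _ i.2.le),
      Set.inter_sdiff_distrib_left]
  have hdisj := pairwise_disjoint_succ_diff hS
  rw [iUnion_inter_succ_diff_zero hS hT,
    Set.ncard_iUnion_of_finite (fun i => hlayer i ▸ Finset.finite_toSet _)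
      (fun i j hij => (hdisj hij).mono Set.inter_subset_right Set.inter_subset_right),
    finsum_eq_sum_of_fintype]
  push_cast
  refine Finset.sum_congr rfl fun i _ => ?_
  rw [hlayer, Set.ncard_coe_finset, card_gridPoints_sdiff (hRne _ i.2.le) (hRne _ i.2)
    (dvd_of_lcm_chain hR (Nat.le_add_right _ 1) i.2) (hb0 i)]

end LcmChain

theorem card_nonintegral_admissible_exponents_general (m : ℕ)
    (k : Fin m → ℚ) (hkpos : ∀ i, 0 < k i) (hanti : StrictAnti k)
    (R : ℕ → ℕ) (hR0 : R 0 = 1)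
    (hR : ∀ i : Fin m, R (i + 1) = Nat.lcm (R i) (k i).den)
    (A : Set ℚ)
    (hA : A = {x : ℚ | ∃ n : ℕ, 0 < n ∧ x = n} ∪
      ⋃ i : Fin m, {x : ℚ | 0 < x ∧ x ≤ k i ∧ ∃ n : ℕ, x = (n : ℚ) / R (i + 1)}) :
    (∀ i : Fin m, ((R (i + 1) : ℚ) * k i).den = 1) ∧
    ((Set.ncard {x : ℚ | x ∈ A ∧ x.den ≠ 1} : ℚ) =
      ∑ i : Fin m, ((R (i + 1) : ℚ) * k i - (⌊(R (i : ℕ) : ℚ) * k i⌋ : ℚ))) := by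
  have hRne : ∀ j ≤ m, R j ≠ 0 :=
    fun j => ne_zero_of_lcm_chain hR (by simp [hR0]) fun i => (k i).den_nz
  have hint : ∀ i : Fin m, (R (i + 1) : ℚ) * k i ∈ Set.range ((↑) : ℤ → ℚ) :=
    fun i => Rat.natCast_mul_mem_range_intCast_of_den_dvd (hR i ▸ Nat.dvd_lcm_right _ _)
  refine ⟨fun i => by obtain ⟨z, hz⟩ := hint i; rw [← hz, Rat.den_intCast], ?_⟩
  have hpiece : ∀ i : Fin m, {x : ℚ | 0 < x ∧ x ≤ k i ∧ ∃ n : ℕ, x = (n : ℚ) / R (i + 1)} =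
      Set.Ioc 0 (k i) ∩ {x | x.den ∣ R (i + 1)} := fun i => by
    rw [← coe_gridPoints (hRne _ i.2)]
    ext x
    exact (mem_gridPoints (hRne _ i.2)).symm
  have hnonint : {x | x ∈ A ∧ x.den ≠ 1} =
      (⋃ i : Fin m, Set.Ioc 0 (k i) ∩ {x | x.den ∣ R (i + 1)}) \ {x | x.den ∣ R 0} := by
    ext x
    rw [hA, Set.iUnion_congr hpiece]
    constructor
    · rintro ⟨⟨n, -, rfl⟩ | hx, hden⟩
      · exact absurd (Rat.den_natCast n) hden
      · exact ⟨hx, by simpa [hR0] using hden⟩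
    · rintro ⟨hx, hden⟩
      exact ⟨Or.inr hx, by simpa [hR0] using hden⟩
  rw [hnonint, ncard_iUnion_Ioc_inter_den_dvd_diff hR hRne hanti.antitone fun i => (hkpos i).le]
  exact Finset.sum_congr rfl fun i _ => by rw [(Int.floor_eq_self_iff_mem _).2 (hint i)]

/-- The number of non-integral admissible exponents of a level datum
`k₁ > ⋯ > k_m` with ramification indices `r_i = R (i+1)` (and `r₀ = R 0 = 1`)
equals `∑ (r_i k_i − ⌊r_{i−1} k_i⌋)`, and moreover each `r_i·k_i` is an integer. -/
theorem card_nonintegral_admissible_exponents (m : ℕ) (hm : 1 ≤ m)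
    (k : Fin m → ℚ) (hkpos : ∀ i, 0 < k i) (hanti : StrictAnti k)
    (R : ℕ → ℕ) (hR0 : R 0 = 1)
    (hR : ∀ i : Fin m, R (i + 1) = Nat.lcm (R i) (k i).den)
    (hmono : ∀ i : Fin m, R i < R (i + 1))
    (A : Set ℚ)
    (hA : A = {x : ℚ | ∃ n : ℕ, 0 < n ∧ x = n} ∪
      ⋃ i : Fin m, {x : ℚ | 0 < x ∧ x ≤ k i ∧ ∃ n : ℕ, x = (n : ℚ) / R (i + 1)}) :
    (∀ i : Fin m, ((R (i + 1) : ℚ) * k i).den = 1) ∧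
    ((Set.ncard {x : ℚ | x ∈ A ∧ x.den ≠ 1} : ℚ) =
      ∑ i : Fin m, ((R (i + 1) : ℚ) * k i - (⌊(R (i : ℕ) : ℚ) * k i⌋ : ℚ))) :=
  card_nonintegral_admissible_exponents_general m k hkpos hanti R hR0 hR A hA
end

section
/- Let r, m be positive integers with m dividing r. Let q ∈ ℂ[t] (t = x^{1/r}) be a polynomial all of whose exponents, as powers of x, are greater than k = s/m (s coprime to m), with ram(q) = r in the sense that the gcd of r and the t-exponents of q is 1. For a, b ∈ ℂ set q_a = q + a x^k and q_b = q + b x^k. Then the Galois orbits {q_a(ζ^j t)} and {q_b(ζ^j t)} (ζ = exp(2πi/r), j = 0,...,r−1) are disjoint if and only if a ≠ b. -/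
/-!
If `q_a(c t) = q_b(d t)` for `r`-th roots of unity `c, d`, compare coefficients. Away from the
exponent `k`, which `q` does not use, this gives `(d / c)^n = 1` for every exponent `n` of `q`;
as `gcd(r, exponents of q) = 1`, the order of `d / c` divides `1`, so `c = d`. The coefficient of
`t^k` then reads `a c^k = b c^k`, whence `a = b`.
-/

open Polynomial

theorem eq_one_of_pow_eq_one_of_gcd_eq_one {M : Type*} [Monoid M] {w : M} {r : ℕ}
    {S : Finset ℕ} (hr : w ^ r = 1) (hS : ∀ n ∈ S, w ^ n = 1) (hgcd : r.gcd (S.gcd id) = 1) :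
    w = 1 := by
  have hdvd : orderOf w ∣ r.gcd (S.gcd id) :=
    Nat.dvd_gcd (orderOf_dvd_of_pow_eq_one hr)
      (Finset.dvd_gcd fun n hn => orderOf_dvd_of_pow_eq_one (hS n hn))
  rwa [hgcd, Nat.dvd_one, orderOf_eq_one_iff] at hdvd

section Rescaling

variable {K : Type*} [Field K]

theorem coeff_add_C_mul_X_pow_comp_C_mul_X {q : K[X]} {k : ℕ} (hk : q.coeff k = 0)
    (a c : K) (n : ℕ) :
    ((q + C a * X ^ k).comp (C c * X)).coeff n = (if n = k then a else q.coeff n) * c ^ n := by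
  rw [comp_C_mul_X_coeff, coeff_add, coeff_C_mul, coeff_X_pow]
  split_ifs with h <;> simp [h, hk]

theorem eq_of_coeff_mul_pow_eq {q : K[X]} {r : ℕ} (hr : 0 < r) {c d : K}
    (hc : c ^ r = 1) (hd : d ^ r = 1) (hram : r.gcd (q.support.gcd id) = 1)
    (h : ∀ n ∈ q.support, q.coeff n * c ^ n = q.coeff n * d ^ n) : c = d := by
  have hc0 : c ≠ 0 := by rintro rfl; simp [hr.ne'] at hc
  have hquot : d / c = 1 := by
    refine eq_one_of_pow_eq_one_of_gcd_eq_one (by rw [div_pow, hc, hd, div_one]) ?_ hram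
    intro n hn
    rw [div_pow, div_eq_one_iff_eq (pow_ne_zero n hc0)]
    exact (mul_left_cancel₀ (mem_support_iff.mp hn) (h n hn)).symm
  exact ((div_eq_one_iff_eq hc0).mp hquot).symm

theorem eq_of_add_C_mul_X_pow_comp_eq {q : K[X]} {r k : ℕ} (hr : 0 < r) (hk : k ∉ q.support)
    (hram : r.gcd (q.support.gcd id) = 1) {a b c d : K} (hc : c ^ r = 1) (hd : d ^ r = 1)
    (h : (q + C a * X ^ k).comp (C c * X) = (q + C b * X ^ k).comp (C d * X)) : a = b := by
  have hk0 : q.coeff k = 0 := notMem_support_iff.mp hk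
  have hcoeff (n : ℕ) := congrArg (coeff · n) h
  simp only [coeff_add_C_mul_X_pow_comp_C_mul_X hk0] at hcoeff
  have hcd : c = d := by
    refine eq_of_coeff_mul_pow_eq hr hc hd hram fun n hn => ?_
    simpa [show n ≠ k from fun hnk => hk (hnk ▸ hn)] using hcoeff n
  have hck : c ^ k ≠ 0 := pow_ne_zero k (by rintro rfl; simp [hr.ne'] at hc)
  simpa [← hcd, hck] using hcoeff k

end Rescaling

open Polynomial in
theorem fission_case_one_general (r m s : ℕ) (hr : 0 < r)
    (q : Polynomial ℂ)
    (hexp : ∀ j ∈ q.support, s * r < j * m)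
    (hram : Nat.gcd r (q.support.gcd id) = 1)
    (ζ : ℂ) (hζ : ζ = Complex.exp (2 * Real.pi * Complex.I / r))
    (a b : ℂ) :
    Disjoint
      ((Finset.range r).image (fun j => (q + C a * X ^ (s * r / m)).comp (C (ζ ^ j) * X)))
      ((Finset.range r).image (fun j => (q + C b * X ^ (s * r / m)).comp (C (ζ ^ j) * X)))
      ↔ a ≠ b := by
  have hζr : ζ ^ r = 1 := (hζ ▸ Complex.isPrimitiveRoot_exp r hr.ne').pow_eq_one
  have hroot (j : ℕ) : (ζ ^ j) ^ r = 1 := by rw [pow_right_comm, hζr, one_pow]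
  have hk : s * r / m ∉ q.support := fun hmem => (hexp _ hmem).not_ge (Nat.div_mul_le_self _ _)
  constructor
  · rintro hdisj rfl
    simp [hr.ne'] at hdisj
  · intro hab
    simp only [Finset.disjoint_left, Finset.mem_image]
    rintro - ⟨i, -, rfl⟩ ⟨j, -, hij⟩
    exact hab (eq_of_add_C_mul_X_pow_comp_eq hr hk hram (hroot i) (hroot j) hij.symm)

open Polynomial in
/-- Case 1 of the fission condition: when `m ∣ r`, the Galois orbits of
`q + a x^{s/m}` and `q + b x^{s/m}` (as polynomials in `t = x^{1/r}`) are
disjoint iff `a ≠ b`. -/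
theorem fission_case_one (r m s : ℕ) (hr : 0 < r) (hm : 0 < m) (hmr : m ∣ r)
    (hs : 0 < s) (hsm : Nat.Coprime s m)
    (q : Polynomial ℂ)
    (hexp : ∀ j ∈ q.support, s * r < j * m)
    (hram : Nat.gcd r (q.support.gcd id) = 1)
    (ζ : ℂ) (hζ : ζ = Complex.exp (2 * Real.pi * Complex.I / r))
    (a b : ℂ) :
    Disjoint
      ((Finset.range r).image (fun j => (q + C a * X ^ (s * r / m)).comp (C (ζ ^ j) * X)))
      ((Finset.range r).image (fun j => (q + C b * X ^ (s * r / m)).comp (C (ζ ^ j) * X)))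
      ↔ a ≠ b :=
  fission_case_one_general r m s hr q hexp hram ζ hζ a b
end
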